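/- arXiv:1708.04862 — 5 statements merged into one kernel-verified Lean document; each statement's English description precedes it below -/
import Mathlib

section
/- For any positive integers k and m with m = 3t for some integer t ≥ 1, and initial scores σ_i = 0 for all m candidates, there exists an assignment of Borda scores by 3 manipulators (each awarding a permutation of {0,1,...,m-1}) such that the maximum total score of any candidate is at most 5m/3 - 2. -/
/-!
Split the scores `0, …, 3t-1` into a top, middle and bottom third and index the candidates by
pairs `(s, q) ∈ Fin 3 × Fin t`. Label the scores `3t-1-q`, `t+q`, `t-1-q` by `(0, q)`, `(1, q)`,
`(2, q)`; these three add up to `5t-2-q`. Manipulator `c` gives candidate `(s, q)` the score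
labelled `(s + c, q)`. This is a bijection for each `c`, and as `c` ranges over `Fin 3`, every
candidate receives each of the three scores of its row exactly once.
-/

open Finset

section CyclicShift

variable {k t : ℕ} [NeZero k]

/-- Candidates `Fin (k * t)` are identified with `Fin k × Fin t` through `finProdFinEquiv`. -/
def cyclicShiftPerm (σ : Fin k × Fin t ≃ Fin (k * t)) (c : Fin k) : Equiv.Perm (Fin (k * t)) :=
  finProdFinEquiv.symm.trans (((Equiv.addRight c).prodCongr (Equiv.refl _)).trans σ)

lemma sum_cyclicShiftPerm (σ : Fin k × Fin t ≃ Fin (k * t)) (i : Fin (k * t)) :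
    ∑ c, (cyclicShiftPerm σ c i : ℕ) = ∑ s, (σ (s, (finProdFinEquiv.symm i).2) : ℕ) :=
  Equiv.sum_comp (Equiv.addLeft (finProdFinEquiv.symm i).1)
    (fun s => (σ (s, (finProdFinEquiv.symm i).2) : ℕ))

end CyclicShift

section Thirds

variable (t : ℕ)

def thirdsScore (p : Fin 3 × Fin t) : ℕ :=
  ![3 * t - 1 - p.2, t + p.2, t - 1 - p.2] p.1

lemma thirdsScore_lt (p : Fin 3 × Fin t) : thirdsScore t p < 3 * t := by
  obtain ⟨s, q, hq⟩ := p
  fin_cases s <;> simp [thirdsScore] <;> omega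

lemma thirdsScore_injective : Function.Injective (thirdsScore t) := by
  rintro ⟨s, q, hq⟩ ⟨s', q', hq'⟩ h
  fin_cases s <;> fin_cases s' <;> simp [thirdsScore] at h ⊢ <;> omega

lemma sum_thirdsScore (q : Fin t) : ∑ s, thirdsScore t (s, q) = 5 * t - 2 - q := by
  simp [Fin.sum_univ_three, thirdsScore]
  omega

noncomputable def thirdsEquiv : Fin 3 × Fin t ≃ Fin (3 * t) :=
  Equiv.ofBijective (fun p => ⟨thirdsScore t p, thirdsScore_lt t p⟩)
    ((Fintype.bijective_iff_injective_and_card _).mpr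
      ⟨fun _ _ h => thirdsScore_injective t (congrArg Fin.val h), by simp⟩)

end Thirds

theorem stmt0_general (m t : ℕ) (hm : m = 3 * t) :
    ∃ π₁ π₂ π₃ : Equiv.Perm (Fin m),
      ∀ i : Fin m, ((π₁ i : ℕ) + (π₂ i : ℕ) + (π₃ i : ℕ)) ≤ 5 * t - 2 := by
  subst hm
  refine ⟨cyclicShiftPerm (thirdsEquiv t) 0, cyclicShiftPerm (thirdsEquiv t) 1,
    cyclicShiftPerm (thirdsEquiv t) 2, fun i => ?_⟩
  calc _ = ∑ c, (cyclicShiftPerm (thirdsEquiv t) c i : ℕ) := (Fin.sum_univ_three _).symm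
    _ = ∑ s, thirdsScore t (s, (finProdFinEquiv.symm i).2) := sum_cyclicShiftPerm _ i
    _ = 5 * t - 2 - (finProdFinEquiv.symm i).2 := sum_thirdsScore t _
    _ ≤ 5 * t - 2 := Nat.sub_le _ _

/-- For m = 3t (t ≥ 1) candidates with all-zero initial scores, there is a
strategy for 3 Borda manipulators (each awarding a permutation of {0,...,m-1})
such that every candidate's total score is at most 5m/3 - 2 = 5t - 2. -/
theorem stmt0 (m t : ℕ) (ht : 1 ≤ t) (hm : m = 3 * t) :
    ∃ π₁ π₂ π₃ : Equiv.Perm (Fin m),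
      ∀ i : Fin m, ((π₁ i : ℕ) + (π₂ i : ℕ) + (π₃ i : ℕ)) ≤ 5 * t - 2 :=
  stmt0_general m t hm
end

section
/- For m = 3t candidates all with equal initial score, the REVERSE greedy algorithm with 3 manipulators produces an outcome in which some candidate attains a total score of 2(m-1), while an optimal strategy achieves maximum score at most 5m/3 - 2; hence REVERSE is worse than optimal by at least m/3 - 1 additively. -/
/-!
REVERSE with alternating votes gives the last candidate the top score `m - 1` from every odd
manipulator, i.e. `⌈k/2⌉ (m - 1)` points. For `m = 3t` one does better by splitting the
candidates into three blocks of size `t`: each voter ranks the blocks in a cyclic rotation, so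
every candidate collects the block offsets `0 + t + 2t`, and the voters alternate the order inside
the blocks so that two of the three within-block ranks sum to `t - 1`. No candidate then exceeds
`3t + (t - 1) + (t - 1) = 5t - 2`.
-/

open Finset

/-- Total score of candidate `i` (among `m`) after `k` alternating REVERSE votes. -/
def reverseScore (m k i : ℕ) : ℕ :=
  ∑ ℓ ∈ range k, if ℓ % 2 = 0 then i else m - 1 - i

theorem reverseScore_last (m k : ℕ) : reverseScore m k (m - 1) = (k + 1) / 2 * (m - 1) := by
  induction k with
  | zero => simp [reverseScore]
  | succ k ih =>
    rw [reverseScore, sum_range_succ, ← reverseScore, ih]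
    split_ifs with hk
    · rw [show (k + 1 + 1) / 2 = (k + 1) / 2 + 1 by omega, Nat.succ_mul]
    · rw [show (k + 1 + 1) / 2 = (k + 1) / 2 by omega]
      omega

namespace Fin

theorem val_add_val_one_add_add_val_two_add (a : Fin 3) :
    (a : ℕ) + ((1 + a : Fin 3) : ℕ) + ((2 + a : Fin 3) : ℕ) = 3 := by
  fin_cases a <;> decide

end Fin

section Blocks

variable {t : ℕ}

/-- The permutation of `Fin (3 * t)`, viewed as three blocks `Fin 3 × Fin t`, that moves the
blocks by `g` and acts by `f` inside each block. -/
def blockPerm (g : Equiv.Perm (Fin 3)) (f : Equiv.Perm (Fin t)) : Equiv.Perm (Fin (3 * t)) :=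
  finProdFinEquiv.permCongr (g.prodCongr f)

theorem blockPerm_apply_val (g : Equiv.Perm (Fin 3)) (f : Equiv.Perm (Fin t)) (a : Fin 3)
    (b : Fin t) : (blockPerm g f (finProdFinEquiv (a, b)) : ℕ) = f b + t * g a := by
  simp [blockPerm, Equiv.permCongr_apply]

theorem exists_three_perms_sum_le :
    ∃ π₁ π₂ π₃ : Equiv.Perm (Fin (3 * t)), ∀ i, (π₁ i : ℕ) + π₂ i + π₃ i ≤ 5 * t - 2 := by
  refine ⟨blockPerm 1 1, blockPerm (Equiv.addLeft 1) Fin.revPerm,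
    blockPerm (Equiv.addLeft 2) 1, fun i => ?_⟩
  obtain ⟨⟨a, b⟩, rfl⟩ := finProdFinEquiv.surjective i
  simp only [blockPerm_apply_val, Equiv.Perm.one_apply, Equiv.coe_addLeft, Fin.revPerm_apply,
    Fin.val_rev]
  have hblocks := congrArg (t * ·) (Fin.val_add_val_one_add_add_val_two_add a)
  simp only [Nat.mul_add] at hblocks
  have hb := b.isLt
  omega

end Blocks

/-- For m = 3t candidates with equal (zero) initial scores and 3 manipulators,
the REVERSE greedy algorithm (odd manipulators award 0,...,m-1 to candidates in order,
even manipulators award the reversed order m-1,...,0) produces some candidate with total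
score 2(m-1), while an optimal strategy keeps every candidate at most 5m/3 - 2 = 5t - 2;
hence REVERSE is at least m/3 - 1 = t - 1 worse additively. -/
theorem stmt1 (m t : ℕ) (ht : 1 ≤ t) (hm : m = 3 * t) :
    (∃ i < m, (∑ ℓ ∈ Finset.range 3, (if ℓ % 2 = 0 then i else m - 1 - i)) = 2 * (m - 1)) ∧
    (∃ π₁ π₂ π₃ : Equiv.Perm (Fin m),
      ∀ i : Fin m, ((π₁ i : ℕ) + (π₂ i : ℕ) + (π₃ i : ℕ)) ≤ 5 * t - 2) ∧
    t - 1 ≤ 2 * (m - 1) - (5 * t - 2) := by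
  subst hm
  exact ⟨⟨3 * t - 1, by omega, reverseScore_last (3 * t) 3⟩, exists_three_perms_sum_le, by omega⟩
end

section
/- In the natural LP relaxation of Borda-UCM with one manipulator and m candidates each of initial score 0, the fractional optimum objective (minimum T such that a feasible fractional assignment exists) is at most (m-1)/2, while any integral solution has objective at least m-1; hence the additive integrality gap is at least (m-1)/2. -/
/-! The uniform matrix with all entries `1/m` is a feasible fractional assignment, and it places
every candidate at the average position `(m - 1)/2`. An integral assignment, by contrast, has to put
some candidate in the last position `m - 1`. -/

open Finset

theorem Fin.sum_univ_val_cast_real (m : ℕ) : ∑ j : Fin m, ((j : ℕ) : ℝ) = m * (m - 1) / 2 := by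
  rw [Fin.sum_univ_eq_sum_range (fun j => (j : ℝ)), ← Nat.cast_sum]
  have h := congrArg (Nat.cast : ℕ → ℝ) (sum_range_id_mul_two m)
  rcases m with _ | m
  · simp
  · push_cast at h ⊢
    simp only [add_sub_cancel_right] at h ⊢
    linarith

theorem exists_le_weighted_row_sum_of_col_sum_ne_zero {ι κ : Type*} [Fintype ι] [Fintype κ]
    (x : ι → κ → ℕ) (w : κ → ℕ) (j : κ) (hj : ∑ i, x i j ≠ 0) :
    ∃ i, w j ≤ ∑ k, w k * x i k := by
  obtain ⟨i, -, hij⟩ := exists_ne_zero_of_sum_ne_zero hj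
  refine ⟨i, ?_⟩
  calc w j ≤ w j * x i j := Nat.le_mul_of_pos_right _ (Nat.pos_of_ne_zero hij)
    _ ≤ ∑ k, w k * x i k := single_le_sum (f := fun k => w k * x i k) (by simp) (mem_univ j)

/-- Integrality gap of the natural LP for Borda-UCM with one manipulator and
m candidates of initial score 0: there is a feasible fractional assignment whose objective
is (m-1)/2, while every integral (0/1, doubly stochastic) solution has some candidate with
score at least m - 1; hence the additive gap is at least (m-1)/2. -/
theorem stmt3 (m : ℕ) (hm : 1 ≤ m) :
    (∃ x : Fin m → Fin m → ℝ,
      (∀ i j, 0 ≤ x i j) ∧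
      (∀ j, ∑ i, x i j = 1) ∧
      (∀ i, ∑ j, x i j = 1) ∧
      (∀ i, ∑ j : Fin m, ((j : ℕ) : ℝ) * x i j ≤ ((m : ℝ) - 1) / 2)) ∧
    (∀ x : Fin m → Fin m → ℕ, (∀ i j, x i j ≤ 1) →
      (∀ j, ∑ i, x i j = 1) → (∀ i, ∑ j, x i j = 1) →
      ∃ i, m - 1 ≤ ∑ j : Fin m, (j : ℕ) * x i j) := by
  have hm0 : (m : ℝ) ≠ 0 := Nat.cast_ne_zero.2 (by omega)
  have hstochastic : ∑ _j : Fin m, (1 / m : ℝ) = 1 := by simp [hm0]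
  refine ⟨⟨fun _ _ => 1 / m, fun _ _ => by positivity, fun _ => hstochastic,
    fun _ => hstochastic, fun _ => ?_⟩, ?_⟩
  · rw [← sum_mul, Fin.sum_univ_val_cast_real]
    field_simp
    exact le_rfl
  · intro x _ hcol _
    exact exists_le_weighted_row_sum_of_col_sum_ne_zero x Fin.val ⟨m - 1, by omega⟩ (by simp [hcol])
end

section
/- Consider km events t_0,...,t_{km-1} sorted in nondecreasing order of their score index, where event t_ℓ has score index j(ℓ). If for every j the number of events with score index at most j is at most (j+1)k + B, then for every ℓ, the new score index ⌊ℓ/k⌋ assigned to event t_ℓ satisfies ⌊ℓ/k⌋ ≤ j(ℓ) + 1 + B/k. Consequently, for a nondecreasing score vector α with α_{i+β} - α_i ≤ g for all i (where β = ⌈1 + B/k⌉), the score change α_{⌊ℓ/k⌋} - α_{j(ℓ)} is at most g for every event. -/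
open Finset

/-!
Since the events are sorted, the first `ℓ + 1` of them all carry a label `≤ j ℓ`, so the
counting hypothesis gives `ℓ + 1 ≤ (j ℓ + 1) k + B`; dividing by `k` yields the bound on
`ℓ / k`, and `⌊B/k⌋ ≤ ⌈B/k⌉` turns it into a shift of at most `β` in the score vector.
-/

theorem Finset.add_one_le_card_filter_range_of_forall_le {p : ℕ → Prop} [DecidablePred p]
    {ℓ n : ℕ} (hℓ : ℓ < n) (hp : ∀ i ≤ ℓ, p i) :
    ℓ + 1 ≤ #{i ∈ range n | p i} := by
  calc ℓ + 1 = #(range (ℓ + 1)) := (card_range _).symm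
    _ ≤ #{i ∈ range n | p i} := card_le_card fun i hi => by
      rw [mem_range, Nat.lt_succ_iff] at hi
      exact mem_filter.mpr ⟨mem_range.mpr (hi.trans_lt hℓ), hp i hi⟩

theorem Nat.div_le_add_div_of_le_mul_add {n a b k : ℕ} (hk : 0 < k) (h : n ≤ a * k + b) :
    n / k ≤ a + b / k := by
  calc n / k ≤ (a * k + b) / k := Nat.div_le_div_right h
    _ = a + b / k := by rw [Nat.add_comm, Nat.add_mul_div_right _ _ hk, Nat.add_comm]

theorem stmt8_general (m k B g : ℕ) (hk : 1 ≤ k) (j : ℕ → ℕ)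
    (hsorted : ∀ ℓ ℓ', ℓ ≤ ℓ' → ℓ' < k * m → j ℓ ≤ j ℓ')
    (hG : ∀ jj, ((Finset.range (k * m)).filter (fun ℓ => j ℓ ≤ jj)).card ≤ (jj + 1) * k + B)
    (α : ℕ → ℕ) (hmono : Monotone α)
    (hg : ∀ i, α (i + (1 + (B + k - 1) / k)) ≤ α i + g) :
    ∀ ℓ < k * m, ℓ / k ≤ j ℓ + 1 + B / k ∧ α (ℓ / k) ≤ α (j ℓ) + g := by
  intro ℓ hℓ
  have hcount : ℓ + 1 ≤ (j ℓ + 1) * k + B :=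
    (add_one_le_card_filter_range_of_forall_le hℓ fun i hi => hsorted i ℓ hi hℓ).trans (hG (j ℓ))
  have hdiv : ℓ / k ≤ j ℓ + 1 + B / k := Nat.div_le_add_div_of_le_mul_add hk (by omega)
  have hfloor_le_ceil : B / k ≤ (B + k - 1) / k := Nat.div_le_div_right (by omega)
  refine ⟨hdiv, ?_⟩
  calc α (ℓ / k) ≤ α (j ℓ + (1 + (B + k - 1) / k)) := hmono (by omega)
    _ ≤ α (j ℓ) + g := hg (j ℓ)

/-- deterministic core of the UCM rounding correction. Given km events with
nondecreasing score labels j(ℓ) < m, if for every score index jj the number of events with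
label ≤ jj is at most (jj+1)k + B, then the new label ⌊ℓ/k⌋ of the ℓ-th event satisfies
⌊ℓ/k⌋ ≤ j(ℓ) + 1 + B/k; consequently, for a nondecreasing score vector α with
α_{i+β} ≤ α_i + g for β = ⌈1 + B/k⌉ (= 1 + ⌈B/k⌉ = 1 + (B+k-1)/k in ℕ), the score change
α_{⌊ℓ/k⌋} - α_{j(ℓ)} is at most g for every event. -/
theorem stmt8 (m k B g : ℕ) (hk : 1 ≤ k) (j : ℕ → ℕ)
    (hjm : ∀ ℓ < k * m, j ℓ < m)
    (hsorted : ∀ ℓ ℓ', ℓ ≤ ℓ' → ℓ' < k * m → j ℓ ≤ j ℓ')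
    (hG : ∀ jj, ((Finset.range (k * m)).filter (fun ℓ => j ℓ ≤ jj)).card ≤ (jj + 1) * k + B)
    (α : ℕ → ℕ) (hmono : Monotone α)
    (hg : ∀ i, α (i + (1 + (B + k - 1) / k)) ≤ α i + g) :
    ∀ ℓ < k * m, ℓ / k ≤ j ℓ + 1 + B / k ∧ α (ℓ / k) ≤ α (j ℓ) + g :=
  stmt8_general m k B g hk j hsorted hG α hmono hg
end

section
/- Suppose for a fixed voter there are m events (one per candidate), each with a score index in {0,...,m-1}, sorted nondecreasingly, and suppose for every j the number of events with score index at most j is at most (j+1) + B. If the event at rank r (0-indexed) is relabeled with score index r, then for a nondecreasing score vector α satisfying α_{i+β} - α_i ≤ g for all valid i with β = ⌈B⌉, the increase α_r - α_{j'} (where j' is the original score index of the rank-r event) is at most g; and after relabeling, each score index in {0,...,m-1} appears exactly once. -/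
open Finset

lemma succ_le_card_filter_le_of_sorted {m r : ℕ} {j : ℕ → ℕ} (hr : r < m)
    (hsorted : ∀ x ≤ r, j x ≤ j r) : r + 1 ≤ #{x ∈ range m | j x ≤ j r} := by
  have hsub : range (r + 1) ⊆ {x ∈ range m | j x ≤ j r} := fun x hx => by
    rw [mem_range, Nat.lt_succ_iff] at hx
    exact mem_filter.2 ⟨mem_range.2 (hx.trans_lt hr), hsorted x hx⟩
  simpa using card_le_card hsub

lemma rank_le_label_add_ceil {m r : ℕ} {B : ℝ} {j : ℕ → ℕ} (hr : r < m)
    (hsorted : ∀ x ≤ r, j x ≤ j r)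
    (hG : (#{x ∈ range m | j x ≤ j r} : ℝ) ≤ j r + 1 + B) :
    r ≤ j r + ⌈B⌉₊ := by
  have hcount : (r + 1 : ℝ) ≤ j r + 1 + B :=
    le_trans (by exact_mod_cast succ_le_card_filter_le_of_sorted hr hsorted) hG
  have hceil := Nat.le_ceil B
  exact_mod_cast (by linarith : (r : ℝ) ≤ j r + ⌈B⌉₊)

lemma card_filter_range_eq_one {m k : ℕ} (hk : k < m) : #{r ∈ range m | r = k} = 1 := by
  simp [filter_eq', hk]

theorem stmt12_general (m g : ℕ) (B : ℝ) (j : ℕ → ℕ)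
    (hsorted : ∀ r r', r ≤ r' → r' < m → j r ≤ j r')
    (hG : ∀ jj : ℕ, ((((Finset.range m).filter (fun r => j r ≤ jj)).card : ℝ) ≤ (jj + 1) + B))
    (α : ℕ → ℕ) (hmono : Monotone α)
    (hg : ∀ i, α (i + ⌈B⌉₊) ≤ α i + g) :
    (∀ r < m, α r ≤ α (j r) + g) ∧
    (∀ jj < m, ((Finset.range m).filter (fun r => r = jj)).card = 1) := by
  refine ⟨fun r hr => ?_, fun _ => card_filter_range_eq_one⟩
  have hrank : r ≤ j r + ⌈B⌉₊ :=
    rank_le_label_add_ceil hr (fun x hx => hsorted x r hx hr) (hG (j r))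
  calc α r ≤ α (j r + ⌈B⌉₊) := hmono hrank
    _ ≤ α (j r) + g := hg (j r)

/-- deterministic core of the WCM per-voter fixing step. For a fixed voter
there are m events (one per candidate) with nondecreasing score labels j(r) < m; if for
every jj the number of events with label ≤ jj is at most (jj+1) + B, and the event at rank
r is relabeled r, then for a nondecreasing score vector α with α_{i+β} ≤ α_i + g where
β = ⌈B⌉, the increase α_r - α_{j(r)} is at most g; moreover after relabeling every score
index in {0,...,m-1} appears exactly once. -/
theorem stmt12 (m g : ℕ) (B : ℝ) (hB : 0 ≤ B) (j : ℕ → ℕ)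
    (hjm : ∀ r < m, j r < m)
    (hsorted : ∀ r r', r ≤ r' → r' < m → j r ≤ j r')
    (hG : ∀ jj : ℕ, ((((Finset.range m).filter (fun r => j r ≤ jj)).card : ℝ) ≤ (jj + 1) + B))
    (α : ℕ → ℕ) (hmono : Monotone α)
    (hg : ∀ i, α (i + ⌈B⌉₊) ≤ α i + g) :
    (∀ r < m, α r ≤ α (j r) + g) ∧
    (∀ jj < m, ((Finset.range m).filter (fun r => r = jj)).card = 1) :=
  stmt12_general m g B j hsorted hG α hmono hg
end
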